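/- The restriction of irreducible representations from the symmetric group S_{n₁+n₂} to S_{n₁} × S_{n₂} is multiplicity free when min(n₁,n₂) ≤ 2; that is, (S_{n+1}, S_n) and (S_{n+2}, S_n × S_2) are strong Gelfand pairs: for every irreducible complex representation π of the big group and every irreducible representation ρ of the subgroup, dim Hom(Res π, ρ) ≤ 1. -/

import Mathlib

/-- A representation is irreducible: it is nonzero and has no invariant subspaces
other than `⊥` and `⊤`. -/
def IsIrreducibleRep {G V : Type*} [Group G] [AddCommGroup V] [Module ℂ V]
    (ρ : Representation ℂ G V) : Prop :=
  (∃ v : V, v ≠ 0) ∧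
  ∀ U : Submodule ℂ V, (∀ g : G, ∀ v ∈ U, ρ g v ∈ U) → U = ⊥ ∨ U = ⊤

/-- The space of `G`-equivariant linear maps between two representations. -/
def EquivariantMaps {G V₁ V₂ : Type*} [Group G]
    [AddCommGroup V₁] [Module ℂ V₁] [AddCommGroup V₂] [Module ℂ V₂]
    (ρ₁ : Representation ℂ G V₁) (ρ₂ : Representation ℂ G V₂) :
    Submodule ℂ (V₁ →ₗ[ℂ] V₂) where
  carrier := {f | ∀ (g : G) (v : V₁), f (ρ₁ g v) = ρ₂ g (f v)}
  add_mem' := by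
    intro f g hf hg x v
    simp [hf x v, hg x v]
  zero_mem' := by
    intro x v
    simp
  smul_mem' := by
    intro c f hf x v
    simp [hf x v]

/-!
Gelfand's trick. If every `g ∈ G` is conjugated to `g⁻¹` by some `ι h`, the antipode
`g ↦ g⁻¹` of `ℂ[G]` fixes every element invariant under conjugation by `ι(H)`; since it reverses
products, these invariant elements commute with each other. For irreducible `π`, Burnside's
theorem makes `ℂ[G] → End V` surjective, and averaging over `H` shows that every endomorphism
commuting with `π ∘ ι` comes from an invariant element, so the commutant of `π ∘ ι` is
commutative. That forces multiplicity at most one: for equivariant `f₁ ≠ 0` and `f₂` into an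
irreducible `ρ`, take an equivariant section `s` of `f₁`; since `s f₁` and `s f₂` commute,
`f₂ = (f₂ s) f₁`, and `f₂ s` is a scalar by Schur's lemma.

For `S_n × S_k ≤ S_{n+k}` with `k ≤ 2`, `g` is conjugated to `g⁻¹` by a permutation reflecting
each cycle of `g`, and the reflections can be chosen to fix or swap the at most two points of
the second block, so that this permutation lies in `S_n × S_k`.
-/

open Module Representation HopfAlgebra MonoidAlgebra

/- By Schur's lemma `End S V` consists of scalars, so every linear map is `End S V`-linear and
the Jacobson density theorem applies to it. -/
theorem Subalgebra.eq_top_of_isSimpleModule {K V : Type*} [Field K] [IsAlgClosed K]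
    [AddCommGroup V] [Module K V] [FiniteDimensional K V] (S : Subalgebra K (End K V))
    [IsSimpleModule S V] : S = ⊤ := by
  classical
  refine Algebra.eq_top_iff.mpr fun X => ?_
  have hX (φ : End S V) (v : V) : X (φ v) = φ (X v) := by
    obtain ⟨c, rfl⟩ := (IsSimpleModule.algebraMap_end_bijective_of_isAlgClosed K).2 φ
    simp [Algebra.algebraMap_eq_smul_one]
  let f : End (End S V) V := { toFun := X, map_add' := X.map_add, map_smul' := hX }
  let b := Module.finBasis K V
  obtain ⟨s, hs⟩ := jacobson_density f (Finset.univ.image b)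
  have : (s : End K V) = X := b.ext fun i => (hs (b i) (by simp)).symm
  exact this ▸ s.2

namespace IsIrreducibleRep

variable {G V : Type*} [Group G] [AddCommGroup V] [Module ℂ V] {ρ : Representation ℂ G V}

theorem nontrivial (h : IsIrreducibleRep ρ) : Nontrivial V :=
  let ⟨v, hv⟩ := h.1; nontrivial_of_ne v 0 hv

theorem finiteDimensional [Finite G] (h : IsIrreducibleRep ρ) : FiniteDimensional ℂ V := by
  obtain ⟨v, hv⟩ := h.1
  set U := Submodule.span ℂ (Set.range fun g => ρ g v)
  have hU : ∀ g, ∀ w ∈ U, ρ g w ∈ U := fun g w hw => by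
    have : ρ g w ∈ U.map (ρ g) := Submodule.mem_map_of_mem hw
    rw [Submodule.map_span] at this
    refine Submodule.span_mono ?_ this
    rintro _ ⟨_, ⟨g', rfl⟩, rfl⟩
    exact ⟨g * g', by simp⟩
  rcases h.2 U hU with hbot | htop
  · have hvU : v ∈ U := Submodule.subset_span ⟨1, by simp⟩
    rw [hbot, Submodule.mem_bot] at hvU
    exact absurd hvU hv
  · have : FiniteDimensional ℂ U := FiniteDimensional.span_of_finite ℂ (Set.finite_range _)
    exact Module.Finite.equiv ((LinearEquiv.ofEq U ⊤ htop).trans Submodule.topEquiv)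

theorem exists_eq_smul_id [FiniteDimensional ℂ V] (h : IsIrreducibleRep ρ) {f : End ℂ V}
    (hf : ∀ g v, f (ρ g v) = ρ g (f v)) : ∃ c : ℂ, f = c • LinearMap.id := by
  have := h.nontrivial
  obtain ⟨c, hc⟩ := End.exists_eigenvalue f
  refine ⟨c, ?_⟩
  have hinv : ∀ g, ∀ w ∈ End.eigenspace f c, ρ g w ∈ End.eigenspace f c := fun g w hw => by
    rw [End.mem_eigenspace_iff] at hw ⊢
    rw [hf, hw, map_smul]
  rcases h.2 _ hinv with hbot | htop
  · exact absurd hbot hc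
  · ext v
    simpa using End.mem_eigenspace_iff.mp (htop ▸ Submodule.mem_top : v ∈ End.eigenspace f c)

theorem isSimpleModule_range_asAlgebraHom (h : IsIrreducibleRep ρ) :
    IsSimpleModule ρ.asAlgebraHom.range V := by
  have := h.nontrivial
  refine { eq_bot_or_eq_top := fun U => ?_ }
  have hU : ∀ g, ∀ v ∈ U.restrictScalars ℂ, ρ g v ∈ U.restrictScalars ℂ := fun g v hv =>
    U.smul_mem ⟨ρ g, MonoidAlgebra.of ℂ G g, ρ.asAlgebraHom_of g⟩ hv
  simpa only [Submodule.restrictScalars_eq_bot_iff, Submodule.restrictScalars_eq_top_iff]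
    using h.2 _ hU

theorem asAlgebraHom_surjective [Finite G] (h : IsIrreducibleRep ρ) :
    Function.Surjective ρ.asAlgebraHom := by
  have := h.finiteDimensional
  have := h.isSimpleModule_range_asAlgebraHom
  exact (AlgHom.range_eq_top _).mp (Subalgebra.eq_top_of_isSimpleModule _)

end IsIrreducibleRep

namespace Representation

variable {k H V W : Type*} [CommRing k] [Group H] [Fintype H] [Invertible (Fintype.card H : k)]
  [AddCommGroup V] [Module k V] [AddCommGroup W] [Module k W]
  {ρ : Representation k H V} {σ : Representation k H W} {Φ : V →ₗ[k] W}

theorem IsIntertwiningMap.map_averageMap (hΦ : ρ.IsIntertwiningMap σ Φ) (v : V) :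
    Φ (ρ.averageMap v) = σ.averageMap (Φ v) := by
  simp [GroupAlgebra.average, map_sum, hΦ.isIntertwining]

theorem IsIntertwiningMap.exists_mem_invariants_of_surjective (hΦ : ρ.IsIntertwiningMap σ Φ)
    (hsurj : Function.Surjective Φ) {w : W} (hw : w ∈ σ.invariants) :
    ∃ v ∈ ρ.invariants, Φ v = w := by
  obtain ⟨v, rfl⟩ := hsurj w
  exact ⟨ρ.averageMap v, ρ.averageMap_invariant v, by
    rw [hΦ.map_averageMap, σ.averageMap_id _ hw]⟩

end Representation

namespace MonoidAlgebra

section CommSemiring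

variable (k G : Type*) [CommSemiring k] [Group G]

noncomputable def conjRep : Representation k G (MonoidAlgebra k G) where
  toFun g := LinearMap.mulLeft k (of k G g) ∘ₗ LinearMap.mulRight k (of k G g⁻¹)
  map_one' := by ext; simp
  map_mul' g h := by ext; simp [mul_assoc]

variable {k G}

theorem conjRep_apply (g : G) (x : MonoidAlgebra k G) :
    conjRep k G g x = of k G g * x * of k G g⁻¹ := (mul_assoc _ _ _).symm

theorem conjRep_mul (g : G) (x y : MonoidAlgebra k G) :
    conjRep k G g (x * y) = conjRep k G g x * conjRep k G g y := by
  simp only [conjRep_apply, mul_assoc, ← mul_assoc (of k G g⁻¹), ← map_mul, inv_mul_cancel,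
    map_one, one_mul]

theorem coeff_conjRep (g : G) (x : MonoidAlgebra k G) (a : G) :
    (conjRep k G g x).coeff a = x.coeff (g⁻¹ * a * g) := by
  simp [conjRep_apply, coeff_mul_single_apply, coeff_single_mul_apply, mul_assoc]

theorem coeff_antipode (x : MonoidAlgebra k G) (a : G) :
    (antipode k x).coeff a = x.coeff a⁻¹ := by
  induction x using MonoidAlgebra.induction_linear with
  | zero => simp
  | add x y hx hy => simp [hx, hy]
  | single g r => classical simp [Finsupp.single_apply, inv_eq_iff_eq_inv]

end CommSemiring

variable {k G H : Type*} [CommRing k] [Group G] [Group H] {ι : H →* G}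

theorem antipode_eq_self_of_mem_invariants (hconj : ∀ g, ∃ h, ι h * g * (ι h)⁻¹ = g⁻¹)
    {x : MonoidAlgebra k G} (hx : x ∈ invariants ((conjRep k G).comp ι)) : antipode k x = x := by
  ext a
  obtain ⟨h, hh⟩ := hconj a
  rw [coeff_antipode, ← congr(coeff $(hx h) a⁻¹), MonoidHom.comp_apply, coeff_conjRep, ← hh]
  group

theorem commute_of_mem_invariants (hconj : ∀ g, ∃ h, ι h * g * (ι h)⁻¹ = g⁻¹)
    {x y : MonoidAlgebra k G} (hx : x ∈ invariants ((conjRep k G).comp ι))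
    (hy : y ∈ invariants ((conjRep k G).comp ι)) : Commute x y := by
  have hxy : x * y ∈ invariants ((conjRep k G).comp ι) := fun h => by
    rw [MonoidHom.comp_apply, conjRep_mul]; exact congr($(hx h) * $(hy h))
  calc x * y = antipode k (x * y) := (antipode_eq_self_of_mem_invariants hconj hxy).symm
    _ = y * x := by
      rw [antipode_mul_antidistrib, antipode_eq_self_of_mem_invariants hconj hx,
        antipode_eq_self_of_mem_invariants hconj hy]

end MonoidAlgebra

theorem mem_invariants_linHom_iff_mem_equivariantMaps {G V W : Type*} [Group G]
    [AddCommGroup V] [Module ℂ V] [AddCommGroup W] [Module ℂ W] {ρ : Representation ℂ G V}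
    {σ : Representation ℂ G W} {f : V →ₗ[ℂ] W} :
    f ∈ invariants (linHom ρ σ) ↔ f ∈ EquivariantMaps ρ σ :=
  (mem_linHom_invariants_iff_isIntertwining f).trans (isIntertwiningMap_iff ρ σ f)

namespace IsIrreducibleRep

variable {G H V W : Type*} [Group G] [Group H] [Fintype H] [AddCommGroup V] [Module ℂ V]
  [AddCommGroup W] [Module ℂ W]

theorem commute_of_mem_invariants_linHom [Finite G] {π : Representation ℂ G V}
    (hπ : IsIrreducibleRep π) {ι : H →* G} (hconj : ∀ g, ∃ h, ι h * g * (ι h)⁻¹ = g⁻¹)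
    {X Y : End ℂ V} (hX : X ∈ invariants (linHom (π.comp ι) (π.comp ι)))
    (hY : Y ∈ invariants (linHom (π.comp ι) (π.comp ι))) : Commute X Y := by
  have : Invertible (Fintype.card H : ℂ) := invertibleOfNonzero (by simp)
  have hΦ : IsIntertwiningMap ((conjRep ℂ G).comp ι) (linHom (π.comp ι) (π.comp ι))
      π.asAlgebraHom.toLinearMap := ⟨fun h x => by
    simp [conjRep_apply, linHom_apply, Module.End.mul_eq_comp, LinearMap.comp_assoc]⟩
  obtain ⟨x, hx, rfl⟩ := hΦ.exists_mem_invariants_of_surjective hπ.asAlgebraHom_surjective hX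
  obtain ⟨y, hy, rfl⟩ := hΦ.exists_mem_invariants_of_surjective hπ.asAlgebraHom_surjective hY
  exact (commute_of_mem_invariants hconj hx hy).map π.asAlgebraHom

theorem exists_rightInverse_mem_equivariantMaps {σ : Representation ℂ H V}
    {ρ : Representation ℂ H W} (hρ : IsIrreducibleRep ρ) {f : V →ₗ[ℂ] W}
    (hf : f ∈ EquivariantMaps σ ρ) (hf0 : f ≠ 0) :
    ∃ s ∈ EquivariantMaps ρ σ, f ∘ₗ s = LinearMap.id := by
  have : Invertible (Fintype.card H : ℂ) := invertibleOfNonzero (by simp)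
  have hrange : LinearMap.range f = ⊤ := by
    refine (hρ.2 _ fun g w hw => ?_).resolve_left fun h => hf0 (LinearMap.range_eq_bot.mp h)
    obtain ⟨v, rfl⟩ := LinearMap.mem_range.mp hw
    exact ⟨σ g v, hf g v⟩
  obtain ⟨s₀, hs₀⟩ := f.exists_rightInverse_of_surjective hrange
  have hΦ : (linHom ρ σ).IsIntertwiningMap (linHom ρ ρ) (LinearMap.llcomp ℂ W V W f) :=
    ⟨fun g s => by ext w; simp [linHom_apply, hf g]⟩
  have hsurj : Function.Surjective (LinearMap.llcomp ℂ W V W f) := fun T =>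
    ⟨s₀ ∘ₗ T, by rw [LinearMap.llcomp_apply', ← LinearMap.comp_assoc, hs₀, LinearMap.id_comp]⟩
  obtain ⟨s, hs, hfs⟩ := hΦ.exists_mem_invariants_of_surjective hsurj
    (w := LinearMap.id) fun g => by ext; simp [linHom_apply]
  exact ⟨s, mem_invariants_linHom_iff_mem_equivariantMaps.mp hs, hfs⟩

theorem rank_equivariantMaps_le_one_of_commute {σ : Representation ℂ H V}
    (hσ : ∀ X ∈ invariants (linHom σ σ), ∀ Y ∈ invariants (linHom σ σ), Commute X Y)
    {ρ : Representation ℂ H W} (hρ : IsIrreducibleRep ρ) :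
    Module.rank ℂ (EquivariantMaps σ ρ) ≤ 1 := by
  have := hρ.finiteDimensional
  rw [rank_submodule_le_one_iff']
  by_cases hM : ∀ f ∈ EquivariantMaps σ ρ, f = 0
  · exact ⟨0, fun f hf => by simp [hM f hf]⟩
  obtain ⟨f₁, hf₁, hf₁0⟩ := not_forall₂.mp hM
  obtain ⟨s, hs, hf₁s⟩ := hρ.exists_rightInverse_mem_equivariantMaps hf₁ hf₁0
  refine ⟨f₁, fun f₂ hf₂ => Submodule.mem_span_singleton.mpr ?_⟩
  have hcomp {f} (hf : f ∈ EquivariantMaps σ ρ) : s ∘ₗ f ∈ invariants (linHom σ σ) :=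
    mem_invariants_linHom_iff_mem_equivariantMaps.mpr fun g v => by simp [hf g v, hs g (f v)]
  have hs_inj : Function.Injective s := LinearMap.injective_of_comp_eq_id s f₁ hf₁s
  have key : f₂ ∘ₗ s ∘ₗ f₁ = f₂ := by
    ext v
    apply hs_inj
    have := congr($((hσ _ (hcomp hf₂) _ (hcomp hf₁)).eq) v)
    simp only [Module.End.mul_apply, LinearMap.comp_apply] at this ⊢
    rw [this, ← LinearMap.comp_apply f₁ s, hf₁s, LinearMap.id_apply]
  obtain ⟨c, hc⟩ := hρ.exists_eq_smul_id (f := f₂ ∘ₗ s) fun g w => by simp [hs g w, hf₂ g (s w)]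
  exact ⟨c, by rw [← key, ← LinearMap.comp_assoc, hc]; rfl⟩

end IsIrreducibleRep

theorem rank_equivariantMaps_comp_le_one {G H V W : Type*} [Group G] [Group H] [Finite G]
    [Fintype H] [AddCommGroup V] [Module ℂ V] [AddCommGroup W] [Module ℂ W] {ι : H →* G}
    (hconj : ∀ g, ∃ h, ι h * g * (ι h)⁻¹ = g⁻¹) {π : Representation ℂ G V}
    (hπ : IsIrreducibleRep π) {ρ : Representation ℂ H W} (hρ : IsIrreducibleRep ρ) :
    Module.rank ℂ (EquivariantMaps (π.comp ι) ρ) ≤ 1 :=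
  hρ.rank_equivariantMaps_le_one_of_commute fun _ hX _ hY =>
    hπ.commute_of_mem_invariants_linHom hconj hX hY

open Function Set

namespace Equiv.Perm

variable {X : Type*} (g : Perm X)

theorem zpow_apply_sub_eq_of_zpow_apply_eq {y : X} {a b : ℤ} (h : (g ^ a) y = (g ^ b) y)
    (t : ℤ) : (g ^ (t - a)) y = (g ^ (t - b)) y := by
  have := congr((g ^ (t - a - b)) $h)
  rwa [← mul_apply, ← mul_apply, ← zpow_add, ← zpow_add, sub_add_cancel,
    show t - a - b + a = t - b by ring, eq_comm] at this

theorem zpow_sub_one_apply (n : ℤ) (x : X) : (g ^ (n - 1)) x = g⁻¹ ((g ^ n) x) := by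
  rw [sub_eq_neg_add, zpow_add, zpow_neg_one, mul_apply]

theorem exists_conj_eq_inv_of_section (b : Quotient (SameCycle.setoid g) → X)
    (hb : ∀ Q, Quotient.mk _ (b Q) = Q) (c : Quotient (SameCycle.setoid g) → ℤ) :
    ∃ σ : Perm X, σ * g * σ⁻¹ = g⁻¹ ∧ ∀ Q (i : ℤ), σ ((g ^ i) (b Q)) = (g ^ (c Q - i)) (b Q) := by
  let cyc : X → Quotient (SameCycle.setoid g) := Quotient.mk _
  have hcyc (x : X) (i : ℤ) : cyc ((g ^ i) x) = cyc x :=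
    Quotient.sound (SameCycle.refl g x).zpow_left
  choose idx hidx using fun x => (Quotient.exact (hb (cyc x)) : g.SameCycle (b (cyc x)) x)
  -- `idx x` is an arbitrary choice, but `f` does not depend on it: this is `hf`.
  let f x := (g ^ (c (cyc x) - idx x)) (b (cyc x))
  have hf (Q) (i : ℤ) : f ((g ^ i) (b Q)) = (g ^ (c Q - i)) (b Q) := by
    have hQ : cyc ((g ^ i) (b Q)) = Q := (hcyc _ _).trans (hb Q)
    have := hidx ((g ^ i) (b Q))
    simp only [f, hQ] at this ⊢
    exact zpow_apply_sub_eq_of_zpow_apply_eq g this _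
  have hinv : Involutive f := fun x => (hf _ _).trans (by rw [sub_sub_cancel, hidx])
  have hg (x : X) : f (g x) = g⁻¹ (f x) := by
    conv_lhs => rw [← hidx x, ← mul_apply, ← zpow_one_add, hf,
      show c (cyc x) - (1 + idx x) = c (cyc x) - idx x - 1 by ring, zpow_sub_one_apply]
  refine ⟨hinv.toPerm f, ?_, hf⟩
  rw [mul_inv_eq_iff_eq_mul]
  ext x
  exact hg x

theorem exists_conj_eq_inv_mapsTo_pair (p q : X) :
    ∃ σ : Perm X, σ * g * σ⁻¹ = g⁻¹ ∧ MapsTo σ {p, q} {p, q} := by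
  classical
  let cyc : X → Quotient (SameCycle.setoid g) := Quotient.mk _
  let b := update (update Quotient.out (cyc q) q) (cyc p) p
  have hb (Q) : cyc (b Q) = Q := by
    simp only [b]
    by_cases hp : Q = cyc p
    · rw [hp, update_self]
    rw [update_of_ne hp]
    by_cases hq : Q = cyc q
    · rw [hq, update_self]
    · rw [update_of_ne hq]; exact Quotient.out_eq Q
  have hbp : b (cyc p) = p := update_self ..
  by_cases hpq : g.SameCycle p q
  · obtain ⟨m, rfl⟩ := hpq
    obtain ⟨σ, hσ, hσb⟩ := exists_conj_eq_inv_of_section g b hb fun _ => m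
    have hp : σ p = (g ^ m) p := by simpa [hbp] using hσb (cyc p) 0
    have hq : σ ((g ^ m) p) = p := by simpa [hbp] using hσb (cyc p) m
    exact ⟨σ, hσ, by rintro x (rfl | rfl) <;> simp [hp, hq]⟩
  · have hbq : b (cyc q) = q := by
      simp only [b]
      rw [update_of_ne fun h => hpq (Quotient.exact (s := SameCycle.setoid g) h.symm),
        update_self]
    obtain ⟨σ, hσ, hσb⟩ := exists_conj_eq_inv_of_section g b hb fun _ => 0
    have hp : σ p = p := by simpa [hbp] using hσb (cyc p) 0
    have hq : σ q = q := by simpa [hbq] using hσb (cyc q) 0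
    exact ⟨σ, hσ, by rintro x (rfl | rfl) <;> simp [hp, hq]⟩

theorem exists_conj_eq_inv_mapsTo_of_ncard_le_two {T : Set X} (hT : T.ncard ≤ 2)
    (hfin : T.Finite) : ∃ σ : Perm X, σ * g * σ⁻¹ = g⁻¹ ∧ MapsTo σ T T := by
  interval_cases h : T.ncard
  · obtain ⟨σ, hσ, -⟩ := exists_conj_eq_inv_of_section g Quotient.out Quotient.out_eq 0
    exact ⟨σ, hσ, by simp [(ncard_eq_zero hfin).mp h]⟩
  · obtain ⟨p, rfl⟩ := ncard_eq_one.mp h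
    simpa using exists_conj_eq_inv_mapsTo_pair g p p
  · obtain ⟨p, q, -, rfl⟩ := ncard_eq_two.mp h
    exact exists_conj_eq_inv_mapsTo_pair g p q

theorem exists_sumCongrHom_conj_eq_inv {α β : Type*} [Finite α] [Finite β] (hβ : Nat.card β ≤ 2)
    (g : Perm (α ⊕ β)) : ∃ h, sumCongrHom α β h * g * (sumCongrHom α β h)⁻¹ = g⁻¹ := by
  obtain ⟨σ, hσ, hmaps⟩ := exists_conj_eq_inv_mapsTo_of_ncard_le_two g
    ((ncard_range_of_injective Sum.inr_injective).trans_le hβ) (finite_range _)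
  obtain ⟨h, rfl⟩ :=
    mem_sumCongrHom_range_of_perm_mapsTo_inl ((perm_mapsTo_inl_iff_mapsTo_inr σ).mpr hmaps)
  exact ⟨h, hσ⟩

end Equiv.Perm

/-- For `k ≤ 2`, the pair `(S_{n+k}, S_n × S_k)` is a strong Gelfand pair: the
restriction of any irreducible complex representation of `S_{n+k}` to the block
subgroup `S_n × S_k` is multiplicity free.  (This covers the pairs
`(S_{n+1}, S_n)` and `(S_{n+2}, S_n × S_2)`.) -/
theorem symmetricGroup_strong_gelfand
    (n k : ℕ) (hk : k ≤ 2)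
    (Vπ Vρ : Type*) [AddCommGroup Vπ] [Module ℂ Vπ] [AddCommGroup Vρ] [Module ℂ Vρ]
    (π : Representation ℂ (Equiv.Perm (Sum (Fin n) (Fin k))) Vπ)
    (hπ : IsIrreducibleRep π)
    (ρ : Representation ℂ (Equiv.Perm (Fin n) × Equiv.Perm (Fin k)) Vρ)
    (hρ : IsIrreducibleRep ρ) :
    Module.rank ℂ
      (EquivariantMaps (π.comp (Equiv.Perm.sumCongrHom (Fin n) (Fin k))) ρ) ≤ 1 :=
  rank_equivariantMaps_comp_le_one
    (Equiv.Perm.exists_sumCongrHom_conj_eq_inv (by simpa using hk)) hπ hρ
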